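/- Let {E_a}_{a=1}^s be a quantum instrument on ℂ^d with real outcome values (v_a), and let σ be a positive definite density matrix with E(σ) = σ and Var_σ(E) > 0. Let ρ be a density matrix with ‖ρ − σ‖₁ ≤ η for some η ∈ (0,1), and let ε > 0. If T ≥ (2 Var_σ(E) / (ε² η)) · t_{aut,T}, then under the trajectory distribution ℙ_ρ over {1,…,s}^T started from ρ, the probability that |(1/T) Σ_{t=1}^T v_{a_t} − v̄| ≥ ε is at most 2η. -/

import Mathlib

open scoped Matrix.Norms.L2Operator ComplexOrder Classical
open Matrix

/-- Positive semidefinite square root (extended by `0` off the PSD matrices). -/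
noncomputable def psdSqrt {d : ℕ} (A : Matrix (Fin d) (Fin d) ℂ) : Matrix (Fin d) (Fin d) ℂ :=
  if h : A.PosSemidef then
    (h.1.eigenvectorUnitary : Matrix (Fin d) (Fin d) ℂ) *
      diagonal ((↑) ∘ (√·) ∘ h.1.eigenvalues) *
      (star h.1.eigenvectorUnitary : Matrix (Fin d) (Fin d) ℂ)
  else 0

/-- The trace norm `‖X‖₁ = Tr((Xᴴ X)^{1/2})`. -/
noncomputable def traceNorm {d : ℕ} (X : Matrix (Fin d) (Fin d) ℂ) : ℝ :=
  (psdSqrt (Xᴴ * X)).trace.re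

/-- The conjugation map `ρ ↦ K ρ Kᴴ` as a linear map. -/
noncomputable def sandwich {d : ℕ} (K : Matrix (Fin d) (Fin d) ℂ) :
    Matrix (Fin d) (Fin d) ℂ →ₗ[ℂ] Matrix (Fin d) (Fin d) ℂ where
  toFun ρ := K * ρ * Kᴴ
  map_add' X Y := by simp [Matrix.mul_add, Matrix.add_mul]
  map_smul' c X := by simp [Matrix.mul_smul, Matrix.smul_mul]

/-- A map is of Kraus form if it is a finite sum of conjugations. -/
def IsKraus {d : ℕ} (E : Matrix (Fin d) (Fin d) ℂ →ₗ[ℂ] Matrix (Fin d) (Fin d) ℂ) : Prop :=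
  ∃ (m : ℕ) (K : Fin m → Matrix (Fin d) (Fin d) ℂ), E = ∑ j : Fin m, sandwich (K j)

/-- A quantum instrument: each branch is of Kraus form and the aggregate map is
trace-preserving. -/
def IsInstrument {d s : ℕ}
    (E : Fin s → (Matrix (Fin d) (Fin d) ℂ →ₗ[ℂ] Matrix (Fin d) (Fin d) ℂ)) : Prop :=
  (∀ a, IsKraus (E a)) ∧
    ∀ ρ : Matrix (Fin d) (Fin d) ℂ, (∑ a, E a ρ).trace = ρ.trace

/-- Sequential application of the instrument branches along a trajectory of outcomes. -/
noncomputable def applySeq {d s : ℕ}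
    (E : Fin s → (Matrix (Fin d) (Fin d) ℂ →ₗ[ℂ] Matrix (Fin d) (Fin d) ℂ)) :
    (T : ℕ) → (Fin T → Fin s) → Matrix (Fin d) (Fin d) ℂ → Matrix (Fin d) (Fin d) ℂ
  | 0, _, ρ => ρ
  | T + 1, a, ρ => applySeq E T (fun i => a i.succ) (E (a 0) ρ)

/-- The trajectory distribution `ℙ_{ρ₀}(a₁,…,a_T) = Tr(E_{a_T} ∘ ⋯ ∘ E_{a_1}(ρ₀))`. -/
noncomputable def trajP {d s : ℕ}
    (E : Fin s → (Matrix (Fin d) (Fin d) ℂ →ₗ[ℂ] Matrix (Fin d) (Fin d) ℂ))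
    (T : ℕ) (ρ₀ : Matrix (Fin d) (Fin d) ℂ) (a : Fin T → Fin s) : ℝ :=
  (applySeq E T a ρ₀).trace.re

/-- The aggregate channel `E = Σ_a E_a`. -/
noncomputable def aggregate {d s : ℕ}
    (E : Fin s → (Matrix (Fin d) (Fin d) ℂ →ₗ[ℂ] Matrix (Fin d) (Fin d) ℂ)) :
    Matrix (Fin d) (Fin d) ℂ →ₗ[ℂ] Matrix (Fin d) (Fin d) ℂ :=
  ∑ a, E a

/-- The stationary mean `v̄ = Σ_a v_a Tr(E_a(σ))`. -/
noncomputable def statMean {d s : ℕ}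
    (E : Fin s → (Matrix (Fin d) (Fin d) ℂ →ₗ[ℂ] Matrix (Fin d) (Fin d) ℂ))
    (v : Fin s → ℝ) (σ : Matrix (Fin d) (Fin d) ℂ) : ℝ :=
  ∑ a, v a * (E a σ).trace.re

/-- The stationary variance `Var_σ(E) = Σ_a (v_a - v̄)² Tr(E_a(σ))`. -/
noncomputable def statVar {d s : ℕ}
    (E : Fin s → (Matrix (Fin d) (Fin d) ℂ →ₗ[ℂ] Matrix (Fin d) (Fin d) ℂ))
    (v : Fin s → ℝ) (σ : Matrix (Fin d) (Fin d) ℂ) : ℝ :=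
  ∑ a, (v a - statMean E v σ) ^ 2 * (E a σ).trace.re

/-- The centered instrument map `Ê_v = Σ_a (v_a - v̄) E_a`. -/
noncomputable def centered {d s : ℕ}
    (E : Fin s → (Matrix (Fin d) (Fin d) ℂ →ₗ[ℂ] Matrix (Fin d) (Fin d) ℂ))
    (v : Fin s → ℝ) (σ : Matrix (Fin d) (Fin d) ℂ) :
    Matrix (Fin d) (Fin d) ℂ →ₗ[ℂ] Matrix (Fin d) (Fin d) ℂ :=
  ∑ a, ((v a - statMean E v σ : ℝ) : ℂ) • E a

/-- The autocorrelation `Corr_σ(E^t) = Tr(Ê_v ∘ E^t ∘ Ê_v(σ))`. -/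
noncomputable def autocorr {d s : ℕ}
    (E : Fin s → (Matrix (Fin d) (Fin d) ℂ →ₗ[ℂ] Matrix (Fin d) (Fin d) ℂ))
    (v : Fin s → ℝ) (σ : Matrix (Fin d) (Fin d) ℂ) (t : ℕ) : ℝ :=
  ((centered E v σ ∘ₗ (aggregate E ^ t) ∘ₗ centered E v σ) σ).trace.re

/-- The integrated autocorrelation time
`t_{aut,T} = 1/2 + Σ_{t=1}^T (1 - t/T) Corr_σ(E^{t-1}) / Var_σ(E)`. -/
noncomputable def tAut {d s : ℕ}
    (E : Fin s → (Matrix (Fin d) (Fin d) ℂ →ₗ[ℂ] Matrix (Fin d) (Fin d) ℂ))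
    (v : Fin s → ℝ) (σ : Matrix (Fin d) (Fin d) ℂ) (T : ℕ) : ℝ :=
  1 / 2 + ∑ t ∈ Finset.Icc 1 T,
    (1 - (t : ℝ) / T) * autocorr E v σ (t - 1) / statVar E v σ

section test
variable {d s : ℕ} (E : Fin s → (Matrix (Fin d) (Fin d) ℂ →ₗ[ℂ] Matrix (Fin d) (Fin d) ℂ))

/-- applySeq as a linear map. -/
noncomputable def applySeqL :
    (T : ℕ) → (Fin T → Fin s) → (Matrix (Fin d) (Fin d) ℂ →ₗ[ℂ] Matrix (Fin d) (Fin d) ℂ)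
  | 0, _ => LinearMap.id
  | T + 1, a => applySeqL T (fun i => a i.succ) ∘ₗ E (a 0)

lemma applySeq_eq : ∀ (T : ℕ) (a : Fin T → Fin s) ρ, applySeq E T a ρ = applySeqL E T a ρ := by
  intro T
  induction T with
  | zero => intro a ρ; rfl
  | succ T ih => intro a ρ; simp [applySeq, applySeqL, ih]

noncomputable def branchSum (W : Fin s → ℂ) :
    Matrix (Fin d) (Fin d) ℂ →ₗ[ℂ] Matrix (Fin d) (Fin d) ℂ := ∑ b, W b • E b

noncomputable def compSeq :
    (T : ℕ) → (Fin T → Fin s → ℂ) → (Matrix (Fin d) (Fin d) ℂ →ₗ[ℂ] Matrix (Fin d) (Fin d) ℂ)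
  | 0, _ => LinearMap.id
  | T + 1, W => compSeq T (fun i => W i.succ) ∘ₗ branchSum E (W 0)

lemma master : ∀ (T : ℕ) (W : Fin T → Fin s → ℂ) (ρ : Matrix (Fin d) (Fin d) ℂ),
    ∑ a : Fin T → Fin s, (∏ t, W t (a t)) • applySeq E T a ρ = compSeq E T W ρ := by
  intro T
  induction T with
  | zero =>
    intro W ρ
    simp [compSeq, applySeq]
  | succ T ih =>
    intro W ρ
    rw [← (Fin.consEquiv (fun _ => Fin s)).sum_comp
      (fun a => (∏ t, W t (a t)) • applySeq E (T+1) a ρ)]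
    rw [Fintype.sum_prod_type]
    have key : ∀ (b : Fin s) (a' : Fin T → Fin s),
        (∏ t, W t ((Fin.cons b a' : ∀ _ : Fin (T+1), Fin s) t)) •
          applySeq E (T+1) (Fin.cons b a' : ∀ _ : Fin (T+1), Fin s) ρ
        = (∏ t, W t.succ (a' t)) • (W 0 b • applySeqL E T a' (E b ρ)) := by
      intro b a'
      rw [Fin.prod_univ_succ]
      simp only [applySeq, applySeq_eq, Fin.cons_succ, Fin.cons_zero, mul_smul]
      exact smul_comm _ _ _
    simp only [Fin.consEquiv, Equiv.coe_fn_mk]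
    rw [Finset.sum_congr rfl fun b _ => Finset.sum_congr rfl fun a' _ => key b a']
    have inner : ∀ a' : Fin T → Fin s,
        ∑ b : Fin s, (∏ t, W t.succ (a' t)) • (W 0 b • applySeqL E T a' (E b ρ))
        = (∏ t, W t.succ (a' t)) • applySeqL E T a' (branchSum E (W 0) ρ) := by
      intro a'
      rw [← Finset.smul_sum]
      congr 1
      rw [branchSum, LinearMap.sum_apply, map_sum]
      refine Finset.sum_congr rfl fun b _ => ?_
      simp
    rw [Finset.sum_comm]
    simp only [inner]
    have := ih (fun i => W i.succ) (branchSum E (W 0) ρ)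
    simp only [applySeq_eq] at this
    rw [this]
    rfl

variable {E}

lemma branchSum_ones : branchSum E (fun _ => (1:ℂ)) = aggregate E := by
  simp [branchSum, aggregate]

lemma compSeq_ones : ∀ T : ℕ, compSeq E T (fun _ _ => (1:ℂ)) = (aggregate E) ^ T := by
  intro T
  induction T with
  | zero => simp [compSeq]; rfl
  | succ T ih =>
    show compSeq E T _ ∘ₗ branchSum E _ = _
    rw [branchSum_ones, ih, pow_succ]
    rfl

lemma compSeq_onept : ∀ (T i : ℕ) (hi : i < T) (w : Fin s → ℂ),
    compSeq E T (fun t b => if (t : ℕ) = i then w b else 1)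
      = ((aggregate E) ^ (T - 1 - i)) ∘ₗ branchSum E w ∘ₗ ((aggregate E) ^ i) := by
  intro T
  induction T with
  | zero => omega
  | succ T ih =>
    intro i hi w
    show compSeq E T _ ∘ₗ branchSum E _ = _
    rcases Nat.eq_zero_or_pos i with h0 | hpos
    · subst h0
      have h1 : (fun t b => if ((t : Fin (T+1)) : ℕ) = 0 then w b else 1) 0 = w := by
        funext b; simp
      have h2 : (fun (t : Fin T) => (fun (t : Fin (T+1)) (b : Fin s) =>
          if (t : ℕ) = 0 then w b else 1) t.succ) = fun _ _ => (1:ℂ) := by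
        funext t b; simp
      rw [h1, h2, compSeq_ones]
      ext X
      simp [LinearMap.comp_apply, Module.End.one_apply, pow_zero]
    · obtain ⟨i', rfl⟩ : ∃ i', i = i' + 1 := ⟨i - 1, by omega⟩
      have h1 : (fun (t : Fin (T+1)) (b : Fin s) => if (t : ℕ) = i' + 1 then w b else 1) 0
          = fun _ => (1:ℂ) := by
        funext b; simp
      have h2 : (fun (t : Fin T) => (fun (t : Fin (T+1)) (b : Fin s) =>
          if (t : ℕ) = i' + 1 then w b else 1) t.succ)
          = fun (t : Fin T) b => if (t : ℕ) = i' then w b else 1 := by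
        funext t b; simp [Fin.val_succ]
      rw [h1, h2, ih i' (by omega) w, branchSum_ones]
      have : (T + 1 - 1 - (i' + 1)) = T - 1 - i' := by omega
      rw [this]
      ext X
      simp [LinearMap.comp_apply, pow_succ, Module.End.mul_apply]

lemma compSeq_twopt : ∀ (T i j : ℕ) (hij : i < j) (hj : j < T) (w u : Fin s → ℂ),
    compSeq E T (fun t b => if (t : ℕ) = i then w b else if (t : ℕ) = j then u b else 1)
      = ((aggregate E) ^ (T - 1 - j)) ∘ₗ branchSum E u ∘ₗ ((aggregate E) ^ (j - 1 - i)) ∘ₗ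
          branchSum E w ∘ₗ ((aggregate E) ^ i) := by
  intro T
  induction T with
  | zero => omega
  | succ T ih =>
    intro i j hij hj w u
    show compSeq E T _ ∘ₗ branchSum E _ = _
    rcases Nat.eq_zero_or_pos i with h0 | hpos
    · subst h0
      have h1 : (fun (t : Fin (T+1)) (b : Fin s) =>
          if (t : ℕ) = 0 then w b else if (t : ℕ) = j then u b else 1) 0 = w := by
        funext b; simp
      have h2 : (fun (t : Fin T) => (fun (t : Fin (T+1)) (b : Fin s) =>
          if (t : ℕ) = 0 then w b else if (t : ℕ) = j then u b else 1) t.succ)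
          = fun (t : Fin T) b => if (t : ℕ) = j - 1 then u b else 1 := by
        funext t b
        have h3 : ((t : ℕ) + 1 = j) ↔ ((t : ℕ) = j - 1) := by omega
        simp [Fin.val_succ, h3]
      rw [h1, h2, compSeq_onept T (j-1) (by omega) u]
      have e1 : T - 1 - (j - 1) = T + 1 - 1 - j := by omega
      have e2 : j - 1 = j - 1 - 0 := by omega
      rw [e1, ← e2]
      ext X
      simp [LinearMap.comp_apply, pow_zero, Module.End.one_apply]
    · obtain ⟨i', rfl⟩ : ∃ i', i = i' + 1 := ⟨i - 1, by omega⟩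
      obtain ⟨j', rfl⟩ : ∃ j', j = j' + 1 := ⟨j - 1, by omega⟩
      have h1 : (fun (t : Fin (T+1)) (b : Fin s) =>
          if (t : ℕ) = i' + 1 then w b else if (t : ℕ) = j' + 1 then u b else 1) 0
          = fun _ => (1:ℂ) := by
        funext b; simp
      have h2 : (fun (t : Fin T) => (fun (t : Fin (T+1)) (b : Fin s) =>
          if (t : ℕ) = i' + 1 then w b else if (t : ℕ) = j' + 1 then u b else 1) t.succ)
          = fun (t : Fin T) b => if (t : ℕ) = i' then w b else if (t : ℕ) = j' then u b else 1 := by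
        funext t b
        simp [Fin.val_succ]
      rw [h1, h2, ih i' j' (by omega) (by omega) w u, branchSum_ones]
      have e1 : (T + 1 - 1 - (j' + 1)) = T - 1 - j' := by omega
      have e2 : (j' + 1 - 1 - (i' + 1)) = j' - 1 - i' := by omega
      rw [e1, e2]
      ext X
      simp [LinearMap.comp_apply, pow_succ, Module.End.mul_apply]

section traces
variable {d s : ℕ} {E : Fin s → (Matrix (Fin d) (Fin d) ℂ →ₗ[ℂ] Matrix (Fin d) (Fin d) ℂ)}
variable (hEtr : ∀ ρ : Matrix (Fin d) (Fin d) ℂ, (∑ a, E a ρ).trace = ρ.trace)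
include hEtr

lemma trace_aggregate (X : Matrix (Fin d) (Fin d) ℂ) : (aggregate E X).trace = X.trace := by
  have : aggregate E X = ∑ a, E a X := by simp [aggregate]
  rw [this, hEtr]

lemma trace_pow_aggregate (k : ℕ) (X : Matrix (Fin d) (Fin d) ℂ) :
    ((aggregate E ^ k) X).trace = X.trace := by
  induction k generalizing X with
  | zero => simp
  | succ k ih =>
    rw [pow_succ, Module.End.mul_apply, ih, trace_aggregate hEtr]

end traces

lemma pow_fixed {d s : ℕ} {E : Fin s → (Matrix (Fin d) (Fin d) ℂ →ₗ[ℂ] Matrix (Fin d) (Fin d) ℂ)}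
    {σ : Matrix (Fin d) (Fin d) ℂ} (hfix : aggregate E σ = σ) (k : ℕ) :
    (aggregate E ^ k) σ = σ := by
  induction k with
  | zero => simp
  | succ k ih => rw [pow_succ, Module.End.mul_apply, hfix, ih]

lemma kraus_posSemidef {d : ℕ} {F : Matrix (Fin d) (Fin d) ℂ →ₗ[ℂ] Matrix (Fin d) (Fin d) ℂ}
    (hF : IsKraus F) {ρ : Matrix (Fin d) (Fin d) ℂ} (hρ : ρ.PosSemidef) :
    (F ρ).PosSemidef := by
  obtain ⟨m, K, rfl⟩ := hF
  rw [LinearMap.sum_apply]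
  refine Finset.sum_induction (fun j => (sandwich (K j)) ρ) (fun A => A.PosSemidef)
    (fun A B hA hB => hA.add hB) Matrix.PosSemidef.zero (fun j _ => ?_)
  exact hρ.mul_mul_conjTranspose_same (K j)

lemma applySeq_posSemidef {d s : ℕ}
    {E : Fin s → (Matrix (Fin d) (Fin d) ℂ →ₗ[ℂ] Matrix (Fin d) (Fin d) ℂ)}
    (hK : ∀ a, IsKraus (E a)) :
    ∀ (T : ℕ) (a : Fin T → Fin s) {ρ : Matrix (Fin d) (Fin d) ℂ} (hρ : ρ.PosSemidef),
      (applySeq E T a ρ).PosSemidef := by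
  intro T
  induction T with
  | zero => intro a ρ hρ; exact hρ
  | succ T ih => intro a ρ hρ; exact ih _ (kraus_posSemidef (hK (a 0)) hρ)

lemma posSemidef_trace_re_nonneg {d : ℕ} {A : Matrix (Fin d) (Fin d) ℂ}
    (hA : A.PosSemidef) : 0 ≤ A.trace.re := by
  rw [Matrix.trace]
  have : (∑ i, A.diag i).re = ∑ i, (A.diag i).re := by
    exact Complex.re_sum _ _
  rw [this]
  apply Finset.sum_nonneg
  intro i _
  have := hA.re_dotProduct_nonneg (Pi.single i 1)
  simpa [dotProduct, Pi.single_apply, apply_ite] using this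

lemma jordan_decomp {d : ℕ} {H : Matrix (Fin d) (Fin d) ℂ} (hH : H.IsHermitian) :
    ∃ P N : Matrix (Fin d) (Fin d) ℂ, P.PosSemidef ∧ N.PosSemidef ∧ H = P - N ∧
      P.trace.re ≤ traceNorm H := by
  set U : Matrix (Fin d) (Fin d) ℂ := (hH.eigenvectorUnitary : Matrix (Fin d) (Fin d) ℂ) with hU
  set lam : Fin d → ℝ := hH.eigenvalues with hlam
  have hU2 : star U * U = 1 := Matrix.mem_unitaryGroup_iff'.mp hH.eigenvectorUnitary.2
  have hspec : H = U * diagonal (fun i => (lam i : ℂ)) * star U := by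
    have hst := hH.spectral_theorem
    rw [Unitary.conjStarAlgAut_apply] at hst
    exact hst
  have hstar : star U = Uᴴ := rfl
  -- the three diagonal pieces
  have mkPSD : ∀ f : Fin d → ℝ, (∀ i, 0 ≤ f i) →
      (U * diagonal (fun i => (f i : ℂ)) * star U).PosSemidef := by
    intro f hf
    rw [hstar]
    exact (Matrix.PosSemidef.diagonal (fun i => by
      simpa using Complex.zero_le_real.mpr (hf i))).mul_mul_conjTranspose_same U
  have mkTr : ∀ f : Fin d → ℝ, (U * diagonal (fun i => (f i : ℂ)) * star U).trace.re
      = ∑ i, f i := by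
    intro f
    rw [Matrix.trace_mul_cycle, hU2, Matrix.one_mul, Matrix.trace_diagonal]
    simp [Complex.re_sum]
  have mkSq : ∀ f g : Fin d → ℝ,
      (U * diagonal (fun i => (f i : ℂ)) * star U) * (U * diagonal (fun i => (g i : ℂ)) * star U)
      = U * diagonal (fun i => ((f i * g i : ℝ) : ℂ)) * star U := by
    intro f g
    simp only [Matrix.mul_assoc]
    rw [← Matrix.mul_assoc (star U) U, hU2, Matrix.one_mul,
      ← Matrix.mul_assoc (diagonal _) (diagonal _), Matrix.diagonal_mul_diagonal]
    norm_cast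
  refine ⟨U * diagonal (fun i => ((max (lam i) 0 : ℝ) : ℂ)) * star U,
    U * diagonal (fun i => ((max (-lam i) 0 : ℝ) : ℂ)) * star U,
    mkPSD _ (fun i => le_max_right _ _), mkPSD _ (fun i => le_max_right _ _), ?_, ?_⟩
  · rw [← Matrix.sub_mul, ← Matrix.mul_sub, Matrix.diagonal_sub]
    have hfun : (fun i => ((max (lam i) 0 : ℝ) : ℂ) - ((max (-lam i) 0 : ℝ) : ℂ))
        = fun i => ((lam i : ℝ) : ℂ) := by
      funext i
      rw [← Complex.ofReal_sub, max_zero_sub_max_neg_zero_eq_self]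
    rw [hfun]
    exact hspec
  · open scoped MatrixOrder in
    have hpsd : (Hᴴ * H).PosSemidef := Matrix.posSemidef_conjTranspose_mul_self H
    have habs_psd := mkPSD (fun i => |lam i|) (fun i => abs_nonneg _)
    have hsq : (U * diagonal (fun i => ((|lam i| : ℝ) : ℂ)) * star U) ^ 2 = Hᴴ * H := by
      have hfun2 : (fun i => ((|lam i| * |lam i| : ℝ) : ℂ))
          = fun i => ((lam i * lam i : ℝ) : ℂ) := by
        funext i
        rw [abs_mul_abs_self]
      rw [pow_two, mkSq, show Hᴴ = H from hH, hspec, mkSq, hfun2]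
    have hkey : U * diagonal (fun i => ((|lam i| : ℝ) : ℂ)) * star U = psdSqrt (Hᴴ * H) := by
      have hnn : (0 : Matrix (Fin d) (Fin d) ℂ) ≤ U * diagonal (fun i => ((|lam i| : ℝ) : ℂ)) * star U :=
        Matrix.nonneg_iff_posSemidef.mpr habs_psd
      have hnn2 : (0 : Matrix (Fin d) (Fin d) ℂ) ≤ Hᴴ * H := Matrix.nonneg_iff_posSemidef.mpr hpsd
      have h1 := CFC.sqrt_unique (a := Hᴴ * H) (by rw [← pow_two]; exact hsq) hnn
      rw [← h1, CFC.sqrt_eq_real_sqrt _ hnn2, cfcₙ_eq_cfc (f := Real.sqrt) (hf := Real.continuous_sqrt.continuousOn) (hf0 := Real.sqrt_zero), hpsd.1.cfc_eq, psdSqrt, dif_pos hpsd]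
      simp only [IsHermitian.cfc, Unitary.conjStarAlgAut_apply]
      rfl
    rw [traceNorm, ← hkey, mkTr, mkTr]
    exact Finset.sum_le_sum fun i _ => max_le (le_abs_self _) (abs_nonneg _)

section moments
variable {d s : ℕ} {E : Fin s → (Matrix (Fin d) (Fin d) ℂ →ₗ[ℂ] Matrix (Fin d) (Fin d) ℂ)}
variable (hEtr : ∀ ρ : Matrix (Fin d) (Fin d) ℂ, (∑ a, E a ρ).trace = ρ.trace)
include hEtr

lemma sum_trajP_eq (T : ℕ) (ρ : Matrix (Fin d) (Fin d) ℂ) :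
    ∑ a : Fin T → Fin s, trajP E T ρ a = ρ.trace.re := by
  have hm := master E T (fun _ _ => (1:ℂ)) ρ
  rw [compSeq_ones] at hm
  simp only [Finset.prod_const_one, one_smul] at hm
  have := congrArg (fun X : Matrix (Fin d) (Fin d) ℂ => X.trace.re) hm
  simp only [Matrix.trace_sum, Complex.re_sum] at this
  simp only [trajP]
  rw [this, trace_pow_aggregate hEtr]

variable {σ : Matrix (Fin d) (Fin d) ℂ} (hfix : aggregate E σ = σ) {v : Fin s → ℝ}
include hfix

lemma diag_moment (T i : ℕ) (hi : i < T) :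
    ∑ a : Fin T → Fin s, (v (a ⟨i, hi⟩) - statMean E v σ) ^ 2 * trajP E T σ a
      = statVar E v σ := by
  set w : Fin s → ℂ := fun b => (((v b - statMean E v σ) ^ 2 : ℝ) : ℂ) with hw
  have hm := master E T (fun t b => if (t : ℕ) = i then w b else 1) σ
  rw [compSeq_onept T i hi w] at hm
  have hprod : ∀ a : Fin T → Fin s,
      (∏ t : Fin T, if (t : ℕ) = i then w (a t) else 1) = w (a ⟨i, hi⟩) := by
    intro a
    rw [Finset.prod_eq_single (⟨i, hi⟩ : Fin T)]
    · simp
    · intro t _ ht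
      have : (t : ℕ) ≠ i := fun h => ht (Fin.ext h)
      simp [this]
    · simp
  simp only [hprod] at hm
  have := congrArg (fun X : Matrix (Fin d) (Fin d) ℂ => X.trace.re) hm
  simp only [Matrix.trace_sum, Matrix.trace_smul, Complex.re_sum, smul_eq_mul] at this
  rw [hw] at this
  simp only [Complex.re_ofReal_mul] at this
  simp only [trajP]
  rw [this]
  · rw [LinearMap.comp_apply, LinearMap.comp_apply, pow_fixed hfix,
      trace_pow_aggregate hEtr]
    rw [branchSum, LinearMap.sum_apply, Matrix.trace_sum]
    simp only [LinearMap.smul_apply, Matrix.trace_smul, smul_eq_mul, Complex.re_sum,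
      Complex.re_ofReal_mul]
    rw [statVar]

end moments

section moments2
variable {d s : ℕ} {E : Fin s → (Matrix (Fin d) (Fin d) ℂ →ₗ[ℂ] Matrix (Fin d) (Fin d) ℂ)}
variable (hEtr : ∀ ρ : Matrix (Fin d) (Fin d) ℂ, (∑ a, E a ρ).trace = ρ.trace)
variable {σ : Matrix (Fin d) (Fin d) ℂ} (hfix : aggregate E σ = σ) {v : Fin s → ℝ}
include hEtr hfix

lemma cross_moment (T i j : ℕ) (hij : i < j) (hj : j < T) :
    ∑ a : Fin T → Fin s,
      ((v (a ⟨i, lt_trans hij hj⟩) - statMean E v σ) * (v (a ⟨j, hj⟩) - statMean E v σ))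
        * trajP E T σ a = autocorr E v σ (j - 1 - i) := by
  set w : Fin s → ℂ := fun b => ((v b - statMean E v σ : ℝ) : ℂ) with hwdef
  have hm := master E T (fun t b => if (t : ℕ) = i then w b else if (t : ℕ) = j then w b else 1) σ
  rw [compSeq_twopt T i j hij hj w w] at hm
  have hprod : ∀ a : Fin T → Fin s,
      (∏ t : Fin T, if (t : ℕ) = i then w (a t) else if (t : ℕ) = j then w (a t) else 1)
        = w (a ⟨i, lt_trans hij hj⟩) * w (a ⟨j, hj⟩) := by
    intro a
    have hsplit : ∀ t : Fin T,
        (if (t : ℕ) = i then w (a t) else if (t : ℕ) = j then w (a t) else 1)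
        = (if (t : ℕ) = i then w (a t) else 1) * (if (t : ℕ) = j then w (a t) else 1) := by
      intro t
      rcases eq_or_ne ((t : ℕ)) i with h | h
      · have h2 : (t : ℕ) ≠ j := by omega
        have h3 : i ≠ j := by omega
        simp [h, h2, h3]
      · simp [h]
    rw [Finset.prod_congr rfl (fun t _ => hsplit t), Finset.prod_mul_distrib]
    congr 1
    · rw [Finset.prod_eq_single (⟨i, lt_trans hij hj⟩ : Fin T)]
      · simp
      · intro t _ ht
        have : (t : ℕ) ≠ i := fun h => ht (Fin.ext h)
        simp [this]
      · simp
    · rw [Finset.prod_eq_single (⟨j, hj⟩ : Fin T)]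
      · simp
      · intro t _ ht
        have : (t : ℕ) ≠ j := fun h => ht (Fin.ext h)
        simp [this]
      · simp
  simp only [hprod] at hm
  have := congrArg (fun X : Matrix (Fin d) (Fin d) ℂ => X.trace.re) hm
  simp only [Matrix.trace_sum, Matrix.trace_smul, Complex.re_sum, smul_eq_mul] at this
  have hcoef : ∀ a : Fin T → Fin s,
      (w (a ⟨i, lt_trans hij hj⟩) * w (a ⟨j, hj⟩) * (applySeq E T a σ).trace).re
      = ((v (a ⟨i, lt_trans hij hj⟩) - statMean E v σ) * (v (a ⟨j, hj⟩) - statMean E v σ))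
          * (applySeq E T a σ).trace.re := by
    intro a
    rw [hwdef]
    rw [← Complex.ofReal_mul, Complex.re_ofReal_mul]
  simp only [hcoef] at this
  simp only [trajP]
  rw [this]
  rw [LinearMap.comp_apply, LinearMap.comp_apply, LinearMap.comp_apply, LinearMap.comp_apply,
    pow_fixed hfix, trace_pow_aggregate hEtr]
  have hbr : branchSum E w = centered E v σ := rfl
  rw [hbr, autocorr, LinearMap.comp_apply, LinearMap.comp_apply]

end moments2

lemma sq_decomp (f : ℕ → ℕ → ℝ) : ∀ n : ℕ,
    ∑ i ∈ Finset.range n, ∑ j ∈ Finset.range n, f i j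
      = (∑ k ∈ Finset.range n, f k k)
        + ∑ j ∈ Finset.range n, ∑ i ∈ Finset.range j, (f i j + f j i) := by
  intro n
  induction n with
  | zero => simp
  | succ n ih =>
    simp only [Finset.sum_range_succ, Finset.sum_add_distrib] at *
    rw [ih]
    ring

lemma iter_sum (g : ℕ → ℝ) : ∀ n : ℕ,
    ∑ j ∈ Finset.range n, ∑ t ∈ Finset.range j, g t
      = ∑ t ∈ Finset.range n, ((n - 1 - t : ℕ) : ℝ) * g t := by
  intro n
  induction n with
  | zero => simp
  | succ n ih =>
    rw [Finset.sum_range_succ, ih, Finset.sum_range_succ]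
    simp only [Nat.add_sub_cancel, Nat.sub_self, Nat.cast_zero, zero_mul, add_zero]
    rw [← Finset.sum_add_distrib]
    refine Eq.symm (Finset.sum_congr rfl fun t ht => ?_)
    have h1 : t < n := Finset.mem_range.mp ht
    have h2 : ((n - t : ℕ) : ℝ) = ((n - 1 - t : ℕ) : ℝ) + 1 := by
      have : (n - t : ℕ) = (n - 1 - t) + 1 := by omega
      rw [this]; push_cast; ring
    rw [h2]; ring

end test

open scoped Fin.NatCast

/-- single-trajectory sample complexity: started from a state `η`-close to the
stationary state in trace norm, if `T ≥ (2 Var_σ(E)/(ε²η)) t_{aut,T}` then the empirical mean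
deviates from `v̄` by at least `ε` with probability at most `2η`. -/
theorem single_trajectory_sample_complexity
    {d s T : ℕ} (hs : 1 ≤ s) (hT : 1 ≤ T)
    (E : Fin s → (Matrix (Fin d) (Fin d) ℂ →ₗ[ℂ] Matrix (Fin d) (Fin d) ℂ))
    (hE : IsInstrument E) (v : Fin s → ℝ)
    (σ : Matrix (Fin d) (Fin d) ℂ) (hσ : σ.PosDef) (hσtr : σ.trace = 1)
    (hfix : aggregate E σ = σ) (hvar : 0 < statVar E v σ)
    (ρ : Matrix (Fin d) (Fin d) ℂ) (hρ : ρ.PosSemidef) (hρtr : ρ.trace = 1)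
    (η : ℝ) (hη : η ∈ Set.Ioo (0 : ℝ) 1) (hρσ : traceNorm (ρ - σ) ≤ η)
    (ε : ℝ) (hε : 0 < ε)
    (hTbig : 2 * statVar E v σ / (ε ^ 2 * η) * tAut E v σ T ≤ T) :
    ∑ a ∈ Finset.univ.filter (fun a : Fin T → Fin s =>
        ε ≤ |(1 / T : ℝ) * (∑ t : Fin T, v (a t)) - statMean E v σ|),
      trajP E T ρ a ≤ 2 * η := by
  classical
  obtain ⟨hK, hEtr⟩ := hE
  have hT0 : (0:ℝ) < T := by exact_mod_cast hT
  haveI : NeZero T := ⟨by omega⟩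
  set V := statVar E v σ with hV
  set c : Fin s → ℝ := fun b => v b - statMean E v σ with hc
  set Pr : (Fin T → Fin s) → ℝ := fun a => trajP E T σ a with hPr
  have hPnn : ∀ a : Fin T → Fin s, 0 ≤ Pr a := fun a =>
    posSemidef_trace_re_nonneg (applySeq_posSemidef hK T a hσ.posSemidef)
  set S : (Fin T → Fin s) → ℝ := fun a => ∑ t : Fin T, c (a t) with hSdef
  set A := Finset.univ.filter (fun a : Fin T → Fin s =>
      ε ≤ |(1 / T : ℝ) * (∑ t : Fin T, v (a t)) - statMean E v σ|) with hA
  set m : ℕ → ℕ → ℝ := fun i j =>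
    ∑ a : Fin T → Fin s, (c (a (i : Fin T)) * c (a (j : Fin T))) * Pr a with hmdef
  -- second moment identity
  have hMdef : ∀ a : Fin T → Fin s, (S a)^2 * Pr a
      = ∑ i ∈ Finset.range T, ∑ j ∈ Finset.range T,
          (c (a (i : Fin T)) * c (a (j : Fin T))) * Pr a := by
    intro a
    have h1 : S a = ∑ i ∈ Finset.range T, c (a (i : Fin T)) := by
      rw [hSdef]
      rw [← Fin.sum_univ_eq_sum_range (fun i => c (a (i : Fin T))) T]
      exact Finset.sum_congr rfl fun t _ => by rw [Fin.cast_val_eq_self]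
    rw [pow_two, h1, Finset.sum_mul_sum, Finset.sum_mul]
    exact Finset.sum_congr rfl fun i _ => by rw [Finset.sum_mul]
  have hM : ∑ a : Fin T → Fin s, (S a)^2 * Pr a
      = (T : ℝ) * V
        + 2 * ∑ t ∈ Finset.range T, ((T - 1 - t : ℕ) : ℝ) * autocorr E v σ t := by
    rw [Finset.sum_congr rfl fun a _ => hMdef a]
    rw [Finset.sum_comm]
    rw [Finset.sum_congr rfl fun (i : ℕ) _ => Finset.sum_comm]
    have hsq := sq_decomp m T
    rw [hmdef] at hsq
    rw [hsq]
    congr 1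
    · -- diagonal part
      have hdiag : ∀ k ∈ Finset.range T, m k k = V := by
        intro k hk
        have hkT := Finset.mem_range.mp hk
        have hcast : ((k : Fin T)) = ⟨k, hkT⟩ :=
          Fin.ext (Fin.val_cast_of_lt hkT)
        have hdm := diag_moment (v := v) hEtr hfix T k hkT
        rw [hmdef, hV, ← hdm]
        refine Finset.sum_congr rfl fun a _ => ?_
        rw [hcast, hc, hPr]
        ring
      rw [Finset.sum_congr rfl hdiag, Finset.sum_const, Finset.card_range,
        nsmul_eq_mul]
    · -- cross part
      have hcross : ∀ j ∈ Finset.range T, ∀ i ∈ Finset.range j,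
          m i j + m j i = 2 * autocorr E v σ (j - 1 - i) := by
        intro j hj i hi
        have hjT := Finset.mem_range.mp hj
        have hij := Finset.mem_range.mp hi
        have hiT : i < T := lt_trans hij hjT
        have hcasti : ((i : Fin T)) = ⟨i, hiT⟩ := Fin.ext (Fin.val_cast_of_lt hiT)
        have hcastj : ((j : Fin T)) = ⟨j, hjT⟩ := Fin.ext (Fin.val_cast_of_lt hjT)
        have hcm := cross_moment (v := v) hEtr hfix T i j hij hjT
        have hmji : m j i = m i j := by
          rw [hmdef]
          exact Finset.sum_congr rfl fun a _ => by ring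
        have hmij : m i j = autocorr E v σ (j - 1 - i) := by
          rw [hmdef, ← hcm]
          refine Finset.sum_congr rfl fun a _ => ?_
          rw [hcasti, hcastj, hc, hPr]
        rw [hmji, hmij]
        ring
      rw [Finset.sum_congr rfl (fun j hj => Finset.sum_congr rfl (hcross j hj))]
      have hrefl : ∀ j : ℕ, ∑ i ∈ Finset.range j, 2 * autocorr E v σ (j - 1 - i)
          = 2 * ∑ t ∈ Finset.range j, autocorr E v σ t := by
        intro j
        rw [← Finset.mul_sum]
        congr 1
        exact Finset.sum_range_reflect (fun t => autocorr E v σ t) j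
      rw [Finset.sum_congr rfl fun j _ => hrefl j, ← Finset.mul_sum,
        iter_sum (fun t => autocorr E v σ t) T]
  -- relate to tAut
  have hIcc : ∑ t ∈ Finset.Icc 1 T, ((T:ℝ) - t) * autocorr E v σ (t-1)
      = ∑ u ∈ Finset.range T, ((T - 1 - u : ℕ):ℝ) * autocorr E v σ u := by
    rw [← Finset.Ico_add_one_right_eq_Icc, Finset.sum_Ico_eq_sum_range]
    refine Finset.sum_congr rfl fun u hu => ?_
    have huT := Finset.mem_range.mp hu
    have h2 : ((T - 1 - u : ℕ) : ℝ) = (T:ℝ) - (1 + u) := by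
      have h3 : (T - 1 - u : ℕ) = T - (1 + u) := by omega
      rw [h3, Nat.cast_sub (by omega)]
      push_cast; ring
    have h4 : (1 + u - 1 : ℕ) = u := by omega
    rw [h2, h4]
    push_cast; ring
  have htaut : 2 * (T:ℝ) * V * tAut E v σ T
      = (T:ℝ) * V + 2 * ∑ u ∈ Finset.range T, ((T - 1 - u : ℕ):ℝ) * autocorr E v σ u := by
    rw [← hIcc, tAut, mul_add, Finset.mul_sum, Finset.mul_sum]
    congr 1
    · ring
    · refine Finset.sum_congr rfl fun t ht => ?_
      have hV0 : V ≠ 0 := ne_of_gt hvar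
      have hT0' : (T:ℝ) ≠ 0 := ne_of_gt hT0
      simp only [← hV]
      field_simp
  have hMtaut : ∑ a : Fin T → Fin s, (S a)^2 * Pr a = 2 * (T:ℝ) * V * tAut E v σ T := by
    rw [hM, htaut]
  -- Chebyshev
  have hsumA : ∑ a ∈ A, Pr a ≤ η := by
    have h1 : ∀ a ∈ A, ε^2 * (T:ℝ)^2 * Pr a ≤ (S a)^2 * Pr a := by
      intro a ha
      have hfil : ε ≤ |(1 / T : ℝ) * (∑ t : Fin T, v (a t)) - statMean E v σ| :=
        (Finset.mem_filter.mp ha).2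
      have hSa : S a = (∑ t : Fin T, v (a t)) - (T:ℝ) * statMean E v σ := by
        rw [hSdef]
        simp only [hc]
        rw [Finset.sum_sub_distrib]
        simp [Finset.card_univ, mul_comm]
      have hSa2 : (1 / T : ℝ) * (∑ t : Fin T, v (a t)) - statMean E v σ = S a / T := by
        rw [hSa]
        field_simp
      rw [hSa2] at hfil
      have habs : ε * T ≤ |S a| := by
        rw [abs_div, abs_of_pos hT0] at hfil
        calc ε * T ≤ (|S a| / T) * T := by
              exact mul_le_mul_of_nonneg_right hfil (le_of_lt hT0)
          _ = |S a| := by field_simp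
      have hsq : (ε * T)^2 ≤ (S a)^2 := by
        calc (ε * T)^2 ≤ |S a|^2 :=
              pow_le_pow_left₀ (by positivity) habs 2
          _ = (S a)^2 := sq_abs _
      have : ε^2 * (T:ℝ)^2 ≤ (S a)^2 := by
        calc ε^2 * (T:ℝ)^2 = (ε * T)^2 := by ring
          _ ≤ (S a)^2 := hsq
      exact mul_le_mul_of_nonneg_right this (hPnn a)
    have h2 : ∑ a ∈ A, ε^2 * (T:ℝ)^2 * Pr a ≤ ∑ a ∈ A, (S a)^2 * Pr a :=
      Finset.sum_le_sum h1
    have h3 : ∑ a ∈ A, (S a)^2 * Pr a ≤ ∑ a : Fin T → Fin s, (S a)^2 * Pr a :=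
      Finset.sum_le_sum_of_subset_of_nonneg (Finset.subset_univ A)
        (fun a _ _ => mul_nonneg (sq_nonneg _) (hPnn a))
    have h4 : 2 * (T:ℝ) * V * tAut E v σ T ≤ ε^2 * η * (T:ℝ)^2 := by
      have hpos : (0:ℝ) < ε^2 * η := mul_pos (pow_pos hε 2) hη.1
      have h5 := mul_le_mul_of_nonneg_left hTbig (le_of_lt hpos)
      have h6 : ε ^ 2 * η * (2 * V / (ε ^ 2 * η) * tAut E v σ T)
          = 2 * V * tAut E v σ T := by
        field_simp
        exact mul_div_cancel_left₀ _ (ne_of_gt hη.1)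
      rw [h6] at h5
      calc 2 * (T:ℝ) * V * tAut E v σ T = (T:ℝ) * (2 * V * tAut E v σ T) := by ring
        _ ≤ (T:ℝ) * (ε^2 * η * T) := mul_le_mul_of_nonneg_left h5 (le_of_lt hT0)
        _ = ε^2 * η * (T:ℝ)^2 := by ring
    have h7 : ε^2 * (T:ℝ)^2 * ∑ a ∈ A, Pr a ≤ ε^2 * (T:ℝ)^2 * η := by
      calc ε^2 * (T:ℝ)^2 * ∑ a ∈ A, Pr a = ∑ a ∈ A, ε^2 * (T:ℝ)^2 * Pr a := by
            rw [Finset.mul_sum]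
        _ ≤ ∑ a ∈ A, (S a)^2 * Pr a := h2
        _ ≤ ∑ a : Fin T → Fin s, (S a)^2 * Pr a := h3
        _ = 2 * (T:ℝ) * V * tAut E v σ T := hMtaut
        _ ≤ ε^2 * η * (T:ℝ)^2 := h4
        _ = ε^2 * (T:ℝ)^2 * η := by ring
    exact le_of_mul_le_mul_left h7 (by positivity)
  -- perturbation
  have hherm : (ρ - σ).IsHermitian := hρ.1.sub hσ.posSemidef.1
  obtain ⟨Pm, Nm, hPm, hNm, hdiff, hPtr⟩ := jordan_decomp hherm
  have hPη : Pm.trace.re ≤ η := le_trans hPtr hρσ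
  have hρeq : ρ = σ + Pm - Nm := by
    calc ρ = σ + (ρ - σ) := by abel
      _ = σ + (Pm - Nm) := by rw [hdiff]
      _ = σ + Pm - Nm := by abel
  have hsplit : ∀ a : Fin T → Fin s,
      trajP E T ρ a = Pr a + trajP E T Pm a - trajP E T Nm a := by
    intro a
    rw [hPr]
    simp only [trajP, applySeq_eq, hρeq]
    rw [map_sub, map_add, Matrix.trace_sub, Matrix.trace_add,
      Complex.sub_re, Complex.add_re]
  have hNnn : ∀ a : Fin T → Fin s, 0 ≤ trajP E T Nm a := fun a =>
    posSemidef_trace_re_nonneg (applySeq_posSemidef hK T a hNm)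
  have hPmnn : ∀ a : Fin T → Fin s, 0 ≤ trajP E T Pm a := fun a =>
    posSemidef_trace_re_nonneg (applySeq_posSemidef hK T a hPm)
  calc ∑ a ∈ A, trajP E T ρ a
      ≤ ∑ a ∈ A, (Pr a + trajP E T Pm a) := Finset.sum_le_sum fun a _ => by
        rw [hsplit a]
        have := hNnn a
        linarith
    _ = (∑ a ∈ A, Pr a) + ∑ a ∈ A, trajP E T Pm a := Finset.sum_add_distrib
    _ ≤ η + ∑ a : Fin T → Fin s, trajP E T Pm a :=
        add_le_add hsumA (Finset.sum_le_sum_of_subset_of_nonneg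
          (Finset.subset_univ A) (fun a _ _ => hPmnn a))
    _ = η + Pm.trace.re := by rw [sum_trajP_eq hEtr]
    _ ≤ η + η := add_le_add_right hPη η
    _ = 2 * η := by ring
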